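/- arXiv:2210.07960 — 7 statements merged into one kernel-verified Lean document; each statement's English description precedes it below -/
import Mathlib

section
/- Let γ, β > 0, c ∈ ℝ, and a, h > 0 with |c| < (a/h)^γ. Then the Shehu transform of t ↦ t^{β-1} · E_{γ,β}(c t^γ) equals (a/h)^{γ-β} / ((a/h)^γ - c), where E_{γ,β}(z) = ∑_{r=0}^∞ z^r / Γ(γr + β) is the two-parameter Mittag-Leffler function. -/
open MeasureTheory Real Set

private lemma aux_integrableOn {p s : ℝ} (hp : 0 < p) (hs : 0 < s) :
    IntegrableOn (fun t : ℝ => t ^ (p - 1) * Real.exp (-(s * t))) (Ioi 0) := by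
  have h1 : IntegrableOn (fun t : ℝ => Real.exp (-(s * t)) * (s * t) ^ (p - 1)) (Ioi 0) := by
    have := (integrableOn_Ioi_comp_mul_left_iff
      (fun u : ℝ => Real.exp (-u) * u ^ (p - 1)) 0 hs).2
    simpa using this (by simpa using Real.GammaIntegral_convergent hp)
  have h2 := h1.const_mul (s ^ (1 - p))
  refine MeasureTheory.IntegrableOn.congr_fun h2 (fun t ht => ?_) measurableSet_Ioi
  have ht : (0:ℝ) < t := ht
  rw [Real.mul_rpow hs.le ht.le]
  rw [show s ^ (1 - p) * (Real.exp (-(s * t)) * (s ^ (p - 1) * t ^ (p - 1)))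
      = (s ^ (1 - p) * s ^ (p - 1)) * (Real.exp (-(s * t)) * t ^ (p - 1)) by ring,
    ← Real.rpow_add hs]
  simp [mul_comm]

private lemma aux_integral {p s : ℝ} (hp : 0 < p) (hs : 0 < s) :
    ∫ t in Ioi (0:ℝ), t ^ (p - 1) * Real.exp (-(s * t)) = (1 / s) ^ p * Real.Gamma p :=
  Real.integral_rpow_mul_exp_neg_mul_Ioi hp hs

theorem shehu_mittagLeffler_two_param
    (γ β c a h : ℝ) (hγ : 0 < γ) (hβ : 0 < β) (ha : 0 < a) (hh : 0 < h)
    (hc : |c| < (a / h) ^ γ) :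
    (∫ t in Ioi (0:ℝ),
        Real.exp (-(a * t) / h) *
          (t ^ (β - 1) * ∑' r : ℕ, (c * t ^ γ) ^ r / Real.Gamma (γ * r + β))) =
      (a / h) ^ (γ - β) / ((a / h) ^ γ - c) := by
  set s : ℝ := a / h with hs_def
  have hs : 0 < s := div_pos ha hh
  clear_value s
  have hsγ : 0 < s ^ γ := rpow_pos_of_pos hs γ
  have hp : ∀ r : ℕ, 0 < γ * r + β := fun r => by positivity
  set F : ℕ → ℝ → ℝ := fun r t =>
    Real.exp (-(s * t)) * (t ^ (β - 1) * ((c * t ^ γ) ^ r / Real.Gamma (γ * r + β))) with hF_def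
  -- pointwise identity on Ioi 0
  have hF_eq : ∀ r : ℕ, ∀ t ∈ Ioi (0:ℝ),
      F r t = (c ^ r / Real.Gamma (γ * r + β)) *
        (t ^ (γ * r + β - 1) * Real.exp (-(s * t))) := by
    intro r t ht
    have ht : (0:ℝ) < t := ht
    have h1 : (t ^ γ) ^ r = t ^ (γ * r) := by
      rw [← Real.rpow_natCast (t ^ γ) r, ← Real.rpow_mul ht.le]
    have h2 : t ^ (γ * r + β - 1) = t ^ (γ * (r:ℝ)) * t ^ (β - 1) := by
      rw [← Real.rpow_add ht]; ring_nf
    rw [hF_def]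
    simp only [mul_pow, h1, h2]
    ring
  have hmeas : ∀ r : ℕ, AEStronglyMeasurable (F r) (volume.restrict (Ioi (0:ℝ))) := by
    intro r
    apply Measurable.aestronglyMeasurable
    fun_prop
  have hInt : ∀ r : ℕ, IntegrableOn (F r) (Ioi (0:ℝ)) := by
    intro r
    have := (aux_integrableOn (hp r) hs).const_mul (c ^ r / Real.Gamma (γ * r + β))
    exact MeasureTheory.IntegrableOn.congr_fun this
      (fun t ht => (hF_eq r t ht).symm) measurableSet_Ioi
  have hIval : ∀ r : ℕ, ∫ t in Ioi (0:ℝ), F r t = c ^ r * (1 / s) ^ (γ * r + β) := by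
    intro r
    rw [setIntegral_congr_fun measurableSet_Ioi (hF_eq r), integral_const_mul,
      aux_integral (hp r) hs]
    have hΓ : Real.Gamma (γ * r + β) ≠ 0 := (Real.Gamma_pos_of_pos (hp r)).ne'
    field_simp
  have hnorm_eq : ∀ r : ℕ, ∀ t ∈ Ioi (0:ℝ),
      ‖F r t‖ = (|c| ^ r / Real.Gamma (γ * r + β)) *
        (t ^ (γ * r + β - 1) * Real.exp (-(s * t))) := by
    intro r t ht
    have ht' : (0:ℝ) < t := ht
    rw [Real.norm_eq_abs, hF_eq r t ht, abs_mul, abs_mul, abs_div, abs_pow,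
      abs_of_pos (Real.Gamma_pos_of_pos (hp r)),
      abs_of_pos (rpow_pos_of_pos ht' _), abs_of_pos (Real.exp_pos _)]
  have hnormval : ∀ r : ℕ, ∫ t in Ioi (0:ℝ), ‖F r t‖ = |c| ^ r * (1 / s) ^ (γ * r + β) := by
    intro r
    rw [setIntegral_congr_fun measurableSet_Ioi (hnorm_eq r), integral_const_mul,
      aux_integral (hp r) hs]
    have hΓ : Real.Gamma (γ * r + β) ≠ 0 := (Real.Gamma_pos_of_pos (hp r)).ne'
    field_simp
  -- geometric structure of the values
  have h1s : (0:ℝ) < 1 / s := by positivity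
  have hinvγ : (1 / s : ℝ) ^ γ = (s ^ γ)⁻¹ := by
    rw [one_div, ← Real.inv_rpow hs.le]
  have hpow : ∀ r : ℕ, (1 / s : ℝ) ^ (γ * r + β) = ((s ^ γ)⁻¹) ^ r * (1 / s) ^ β := by
    intro r
    rw [Real.rpow_add h1s, ← hinvγ, ← Real.rpow_natCast ((1/s) ^ γ) r,
      ← Real.rpow_mul h1s.le]
  -- summability of the bound
  have hx0 : (0:ℝ) ≤ |c| * (s ^ γ)⁻¹ := by positivity
  have hx1 : |c| * (s ^ γ)⁻¹ < 1 := by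
    rw [mul_inv_lt_iff₀ hsγ, one_mul]; exact hc
  have hbound_summable : Summable (fun r : ℕ => |c| ^ r * (1 / s : ℝ) ^ (γ * r + β)) := by
    have : Summable (fun r : ℕ => (|c| * (s ^ γ)⁻¹) ^ r * (1 / s : ℝ) ^ β) :=
      (summable_geometric_of_lt_one hx0 hx1).mul_right _
    refine this.congr fun r => ?_
    rw [hpow r, mul_pow]
    ring
  -- apply integral_tsum
  have hfin : ∑' r : ℕ, ∫⁻ t in Ioi (0:ℝ), ‖F r t‖ₑ ≠ ⊤ := by
    have heq : ∀ r : ℕ, ∫⁻ t in Ioi (0:ℝ), ‖F r t‖ₑ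
        = ENNReal.ofReal (|c| ^ r * (1 / s) ^ (γ * r + β)) := by
      intro r
      rw [← MeasureTheory.ofReal_integral_norm_eq_lintegral_enorm (hInt r), hnormval r]
    simp_rw [heq]
    rw [← ENNReal.ofReal_tsum_of_nonneg (fun r => by positivity) hbound_summable]
    exact ENNReal.ofReal_ne_top
  have hmain : (∫ t in Ioi (0:ℝ), ∑' r : ℕ, F r t) = ∑' r : ℕ, ∫ t in Ioi (0:ℝ), F r t :=
    MeasureTheory.integral_tsum hmeas hfin
  -- identify the original integrand with ∑' F r
  have hintegrand : ∀ t : ℝ,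
      Real.exp (-(a * t) / h) *
        (t ^ (β - 1) * ∑' r : ℕ, (c * t ^ γ) ^ r / Real.Gamma (γ * r + β))
      = ∑' r : ℕ, F r t := by
    intro t
    have hexp : -(a * t) / h = -(s * t) := by
      rw [hs_def]; field_simp
    rw [hexp, hF_def]
    simp only
    rw [tsum_mul_left, tsum_mul_left]
  calc (∫ t in Ioi (0:ℝ),
        Real.exp (-(a * t) / h) *
          (t ^ (β - 1) * ∑' r : ℕ, (c * t ^ γ) ^ r / Real.Gamma (γ * r + β)))
      = ∫ t in Ioi (0:ℝ), ∑' r : ℕ, F r t := by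
        exact setIntegral_congr_fun measurableSet_Ioi fun t _ => hintegrand t
    _ = ∑' r : ℕ, ∫ t in Ioi (0:ℝ), F r t := hmain
    _ = ∑' r : ℕ, (c * (s ^ γ)⁻¹) ^ r * (1 / s) ^ β := by
        refine tsum_congr fun r => ?_
        rw [hIval r, hpow r, mul_pow]
        ring
    _ = (1 - c * (s ^ γ)⁻¹)⁻¹ * (1 / s) ^ β := by
        rw [tsum_mul_right, tsum_geometric_of_abs_lt_one (by
          rwa [abs_mul, abs_inv, abs_of_pos hsγ])]
    _ = s ^ (γ - β) / (s ^ γ - c) := by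
        have hβs : (0:ℝ) < s ^ β := rpow_pos_of_pos hs β
        have hne : s ^ γ - c ≠ 0 := by
          have : c < s ^ γ := lt_of_le_of_lt (le_abs_self c) hc
          exact sub_ne_zero.mpr this.ne'
        rw [Real.rpow_sub hs, one_div, Real.inv_rpow hs.le]
        have h3 : (1 - c * (s ^ γ)⁻¹) = (s ^ γ - c) * (s ^ γ)⁻¹ := by
          field_simp
        rw [h3, mul_inv, inv_inv, div_div, div_eq_mul_inv, mul_inv]
        ring
end

section
/- For γ > 0, c ∈ ℝ, and a, h > 0 with |c| < (a/h)^γ, the Shehu transform of t ↦ E_γ(c t^γ) equals (a/h)^{γ-1} / ((a/h)^γ - c), where E_γ(z) = ∑_{r=0}^∞ z^r/Γ(γr+1). -/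
open MeasureTheory Real Set

theorem shehu_mittagLeffler_one_param
    (γ c a h : ℝ) (hγ : 0 < γ) (ha : 0 < a) (hh : 0 < h)
    (hc : |c| < (a / h) ^ γ) :
    (∫ t in Ioi (0:ℝ),
        Real.exp (-(a * t) / h) *
          ∑' r : ℕ, (c * t ^ γ) ^ r / Real.Gamma (γ * r + 1)) =
      (a / h) ^ (γ - 1) / ((a / h) ^ γ - c) := by
  have hS : 0 < a / h := div_pos ha hh
  set S := a / h with hSdef
  have hSγ : 0 < S ^ γ := Real.rpow_pos_of_pos hS γ
  set F : ℕ → ℝ → ℝ := fun r t =>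
    (c ^ r / Real.Gamma (γ * r + 1)) * (t ^ (γ * (r:ℝ)) * Real.exp (-(S * t))) with hF
  have hGpos : ∀ r : ℕ, 0 < Real.Gamma (γ * r + 1) := fun r =>
    Real.Gamma_pos_of_pos (by positivity)
  have hrs : ∀ r : ℕ, (-1:ℝ) < γ * r := fun r => by
    have : (0:ℝ) ≤ γ * r := by positivity
    linarith
  have hint : ∀ r : ℕ, IntegrableOn (fun t => t ^ (γ*(r:ℝ)) * Real.exp (-(S*t))) (Ioi 0) := by
    intro r
    have h0 := integrableOn_rpow_mul_exp_neg_mul_rpow (p := 1) (s := γ*(r:ℝ)) (b := S)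
      (hrs r) one_pos hS
    refine h0.congr_fun (fun t _ => ?_) measurableSet_Ioi
    simp only [Real.rpow_one, neg_mul]
  have hval : ∀ r : ℕ, ∫ t in Ioi 0, t ^ (γ*(r:ℝ)) * Real.exp (-(S*t)) =
      (1/S) ^ (γ*(r:ℝ)+1) * Real.Gamma (γ*(r:ℝ)+1) := by
    intro r
    have h0 := Real.integral_rpow_mul_exp_neg_mul_Ioi (a := γ*(r:ℝ)+1) (r := S)
      (by have := hrs r; linarith) hS
    simpa using h0
  have heq : ∀ t ∈ Ioi (0:ℝ),
      Real.exp (-(a * t) / h) * ∑' r : ℕ, (c * t ^ γ) ^ r / Real.Gamma (γ * r + 1)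
        = ∑' r : ℕ, F r t := by
    intro t ht
    rw [← tsum_mul_left]
    congr 1; funext r
    have h1 : (c * t ^ γ) ^ r = c ^ r * t ^ (γ * (r:ℝ)) := by
      rw [mul_pow, ← Real.rpow_natCast (t ^ γ) r, ← Real.rpow_mul (le_of_lt ht)]
    have h2 : -(a*t)/h = -(S*t) := by rw [hSdef]; ring
    rw [h2, h1, hF]
    ring
  have hFint : ∀ r : ℕ, Integrable (F r) (volume.restrict (Ioi 0)) := fun r =>
    ((hint r).const_mul _)
  have hq1 : |c| / S ^ γ < 1 := (div_lt_one hSγ).mpr hc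
  have hnormval : ∀ r : ℕ, (∫ t in Ioi (0:ℝ), ‖F r t‖) =
      (1/S) * (|c| / S ^ γ) ^ r := by
    intro r
    have e1 : ∀ t ∈ Ioi (0:ℝ), ‖F r t‖ =
        (|c| ^ r / Real.Gamma (γ * r + 1)) * (t ^ (γ*(r:ℝ)) * Real.exp (-(S*t))) := by
      intro t ht
      have ht' : (0:ℝ) < t := ht
      have hnn : 0 ≤ t ^ (γ*(r:ℝ)) * Real.exp (-(S*t)) := by positivity
      rw [hF]
      rw [norm_mul, Real.norm_of_nonneg hnn, Real.norm_eq_abs, abs_div, abs_pow,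
        abs_of_pos (hGpos r)]
    rw [setIntegral_congr_fun measurableSet_Ioi e1, integral_const_mul, hval r]
    have hpow : (1/S) ^ (γ*(r:ℝ)+1) = (1/S) * ((1/S) ^ γ) ^ r := by
      rw [Real.rpow_add (by positivity), Real.rpow_one, Real.rpow_mul (by positivity : (0:ℝ) ≤ 1/S),
        Real.rpow_natCast]
      ring
    rw [hpow]
    have hG : Real.Gamma (γ * (r:ℝ) + 1) = Real.Gamma (γ * r + 1) := rfl
    rw [hG]
    have hinv : (1/S : ℝ) ^ γ = 1 / S ^ γ := by
      rw [one_div, Real.inv_rpow hS.le, one_div]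
    rw [hinv]
    field_simp [(hGpos r).ne']
    rw [← mul_pow, mul_one_div]
  have hsum : Summable fun r : ℕ => ∫ t in Ioi (0:ℝ), ‖F r t‖ := by
    simp only [hnormval]
    exact (summable_geometric_of_lt_one (by positivity) hq1).mul_left _
  rw [setIntegral_congr_fun measurableSet_Ioi heq,
    ← integral_tsum_of_summable_integral_norm hFint hsum]
  have hIval : ∀ r : ℕ, (∫ t in Ioi (0:ℝ), F r t) = (1/S) * (c / S ^ γ) ^ r := by
    intro r
    rw [hF]
    simp only
    rw [integral_const_mul, hval r]
    have hpow : (1/S) ^ (γ*(r:ℝ)+1) = (1/S) * (1 / S ^ γ) ^ r := by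
      rw [Real.rpow_add (by positivity), Real.rpow_one, Real.rpow_mul (by positivity : (0:ℝ) ≤ 1/S),
        Real.rpow_natCast, one_div, Real.inv_rpow hS.le, one_div]
      ring
    rw [hpow]
    have hG : Real.Gamma (γ * (r:ℝ) + 1) = Real.Gamma (γ * r + 1) := rfl
    rw [hG]
    rw [div_pow, div_pow, one_pow]
    field_simp [(hGpos r).ne']
  simp only [hIval]
  rw [tsum_mul_left, tsum_geometric_of_norm_lt_one (by
    rw [Real.norm_eq_abs, abs_div, abs_of_pos hSγ]; exact hq1)]
  have hd : S ^ γ - c ≠ 0 := by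
    have := (abs_lt.mp hc).2; linarith
  rw [Real.rpow_sub hS, Real.rpow_one]
  field_simp
end

section
/- Let f, g : ℝ → ℝ be continuous functions of exponential order, vanishing on (-∞,0), and let (f*g)(t) = ∫₀^t f(t-τ)g(τ) dτ. Then for a, h > 0 sufficiently large, the Shehu transform of f*g equals the product of the Shehu transforms: H(f*g)(a,h) = H(f)(a,h) · H(g)(a,h). -/
/-!
Damping by `exp (-(s * t))` with `s = a / h` turns `f` and `g` into integrable functions
`F`, `G` supported in `[0, ∞)`, and since `exp (-(s * t)) = exp (-(s * (t - τ))) * exp (-(s * τ))`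
the damped Volterra convolution `exp (-(s * t)) * ∫₀ᵗ f (t - τ) g τ dτ` is exactly `(F ⋆ G) t`.
The theorem is then Fubini for convolutions, `∫ F ⋆ G = (∫ F) * (∫ G)`.
-/

open MeasureTheory Real Set
open scoped Convolution

theorem setIntegral_Ioi_zero_eq_integral {E : Type*} [NormedAddCommGroup E] [NormedSpace ℝ E]
    {φ : ℝ → E} (hφ : ∀ t < 0, φ t = 0) : ∫ t in Ioi 0, φ t = ∫ t, φ t := by
  rw [← integral_Ici_eq_integral_Ioi]
  exact setIntegral_eq_integral_of_forall_compl_eq_zero fun t ht => hφ t (not_le.mp ht)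

theorem integrable_exp_neg_mul_mul_of_abs_le {φ : ℝ → ℝ} {M c s : ℝ}
    (hφm : AEStronglyMeasurable φ) (hφ0 : ∀ t < 0, φ t = 0)
    (hφb : ∀ t ≥ 0, |φ t| ≤ M * exp (c * t)) (hcs : c < s) :
    Integrable fun t => exp (-(s * t)) * φ t := by
  have hm : AEStronglyMeasurable fun t => exp (-(s * t)) * φ t :=
    (continuous_exp.comp (continuous_const.mul continuous_id).neg).aestronglyMeasurable.mul hφm
  have hIic : IntegrableOn (fun t => exp (-(s * t)) * φ t) (Iic 0) := by
    rw [integrableOn_Iic_iff_integrableOn_Iio]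
    refine integrableOn_zero.congr_fun (fun t ht => ?_) measurableSet_Iio
    simp [hφ0 t ht]
  have hIoi : IntegrableOn (fun t => exp (-(s * t)) * φ t) (Ioi 0) := by
    refine ((exp_neg_integrableOn_Ioi 0 (sub_pos.mpr hcs)).const_mul M).mono' hm.restrict ?_
    filter_upwards [ae_restrict_mem measurableSet_Ioi] with t ht
    calc ‖exp (-(s * t)) * φ t‖ = exp (-(s * t)) * |φ t| := by
          rw [norm_mul, norm_of_nonneg (exp_pos _).le, norm_eq_abs]
      _ ≤ exp (-(s * t)) * (M * exp (c * t)) := by gcongr; exact hφb t (le_of_lt ht)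
      _ = M * exp (-(s - c) * t) := by rw [mul_left_comm, ← exp_add]; ring_nf
  rw [← integrableOn_univ, ← Iic_union_Ioi (a := (0 : ℝ))]
  exact hIic.union hIoi

section CausalConvolution

variable {F G : ℝ → ℝ} (hF : ∀ t < 0, F t = 0) (hG : ∀ t < 0, G t = 0)
include hF hG

theorem convolution_eq_zero_of_neg {t : ℝ} (ht : t < 0) : (F ⋆ G) t = 0 := by
  rw [convolution_lsmul_swap]
  refine integral_eq_zero_of_ae (Filter.Eventually.of_forall fun τ => ?_)
  rcases lt_or_ge τ 0 with hτ | hτ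
  · simp [hG τ hτ]
  · simp [hF (t - τ) (by linarith)]

theorem convolution_eq_intervalIntegral {t : ℝ} (ht : 0 ≤ t) :
    (F ⋆ G) t = ∫ τ in 0..t, F (t - τ) * G τ := by
  have hcompl : ∀ τ ∉ Icc 0 t, F (t - τ) * G τ = 0 := by
    intro τ hτ
    rcases lt_or_ge τ 0 with hτ0 | hτ0
    · simp [hG τ hτ0]
    · have htτ : t < τ := not_le.mp fun hτt => hτ ⟨hτ0, hτt⟩
      simp [hF (t - τ) (by linarith)]
  simp only [convolution_lsmul_swap, smul_eq_mul]
  rw [intervalIntegral.integral_of_le ht, ← integral_Icc_eq_integral_Ioc,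
    setIntegral_eq_integral_of_forall_compl_eq_zero hcompl]

end CausalConvolution

theorem exp_neg_mul_mul_intervalIntegral_eq_convolution {f g : ℝ → ℝ}
    (hf : ∀ t < 0, f t = 0) (hg : ∀ t < 0, g t = 0) (s : ℝ) {t : ℝ} (ht : 0 ≤ t) :
    exp (-(s * t)) * ∫ τ in 0..t, f (t - τ) * g τ =
      ((fun t => exp (-(s * t)) * f t) ⋆ (fun t => exp (-(s * t)) * g t)) t := by
  rw [convolution_eq_intervalIntegral (fun t ht => by simp [hf t ht])
    (fun t ht => by simp [hg t ht]) ht, ← intervalIntegral.integral_const_mul]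
  refine intervalIntegral.integral_congr fun τ _ => ?_
  have hexp : exp (-(s * t)) = exp (-(s * (t - τ))) * exp (-(s * τ)) := by
    rw [← exp_add]; ring_nf
  simp only [hexp]
  ring

theorem shehu_convolution_general
    (f g : ℝ → ℝ) (Mf Mg c : ℝ)
    (hfc : Continuous f) (hgc : Continuous g)
    (hf0 : ∀ t < (0:ℝ), f t = 0) (hg0 : ∀ t < (0:ℝ), g t = 0)
    (hfb : ∀ t ≥ (0:ℝ), |f t| ≤ Mf * Real.exp (c * t))
    (hgb : ∀ t ≥ (0:ℝ), |g t| ≤ Mg * Real.exp (c * t))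
    (a h : ℝ) (hgt : c < a / h) :
    (∫ t in Ioi (0:ℝ),
        Real.exp (-(a * t) / h) * ∫ τ in (0:ℝ)..t, f (t - τ) * g τ) =
      (∫ t in Ioi (0:ℝ), Real.exp (-(a * t) / h) * f t) *
        (∫ t in Ioi (0:ℝ), Real.exp (-(a * t) / h) * g t) := by
  have hs : ∀ t, -(a * t) / h = -(a / h * t) := fun t => by ring
  simp only [hs]
  set F := fun t => exp (-(a / h * t)) * f t
  set G := fun t => exp (-(a / h * t)) * g t
  have hF0 : ∀ t < 0, F t = 0 := fun t ht => by simp [F, hf0 t ht]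
  have hG0 : ∀ t < 0, G t = 0 := fun t ht => by simp [G, hg0 t ht]
  calc (∫ t in Ioi 0, exp (-(a / h * t)) * ∫ τ in 0..t, f (t - τ) * g τ)
      = ∫ t in Ioi 0, (F ⋆ G) t := setIntegral_congr_fun measurableSet_Ioi fun t ht =>
        exp_neg_mul_mul_intervalIntegral_eq_convolution hf0 hg0 _ (le_of_lt ht)
    _ = ∫ t, (F ⋆ G) t :=
        setIntegral_Ioi_zero_eq_integral fun t ht => convolution_eq_zero_of_neg hF0 hG0 ht
    _ = (∫ t, F t) * ∫ t, G t := integral_convolution _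
        (integrable_exp_neg_mul_mul_of_abs_le hfc.aestronglyMeasurable hf0 hfb hgt)
        (integrable_exp_neg_mul_mul_of_abs_le hgc.aestronglyMeasurable hg0 hgb hgt)
    _ = (∫ t in Ioi 0, F t) * ∫ t in Ioi 0, G t := by
        rw [setIntegral_Ioi_zero_eq_integral hF0, setIntegral_Ioi_zero_eq_integral hG0]

theorem shehu_convolution
    (f g : ℝ → ℝ) (Mf Mg c : ℝ)
    (hfc : Continuous f) (hgc : Continuous g)
    (hf0 : ∀ t < (0:ℝ), f t = 0) (hg0 : ∀ t < (0:ℝ), g t = 0)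
    (hfb : ∀ t ≥ (0:ℝ), |f t| ≤ Mf * Real.exp (c * t))
    (hgb : ∀ t ≥ (0:ℝ), |g t| ≤ Mg * Real.exp (c * t))
    (a h : ℝ) (ha : 0 < a) (hh : 0 < h) (hgt : c < a / h) :
    (∫ t in Ioi (0:ℝ),
        Real.exp (-(a * t) / h) * ∫ τ in (0:ℝ)..t, f (t - τ) * g τ) =
      (∫ t in Ioi (0:ℝ), Real.exp (-(a * t) / h) * f t) *
        (∫ t in Ioi (0:ℝ), Real.exp (-(a * t) / h) * g t) :=
  shehu_convolution_general f g Mf Mg c hfc hgc hf0 hg0 hfb hgb a h hgt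
end

section
/- Let γ > 0 and f : ℝ → ℝ be continuous and of exponential order. The Riemann-Liouville fractional integral I^γ f(t) = (1/Γ(γ)) ∫₀^t (t-τ)^{γ-1} f(τ) dτ satisfies H(I^γ f)(a,h) = (a/h)^{-γ} · H(f)(a,h) for a, h > 0 with a/h large enough. -/
open MeasureTheory Real Set

-- translated Gamma integral
lemma aux_int (γ s τ : ℝ) (hγ : 0 < γ) (hs : 0 < s) :
    IntegrableOn (fun t => Real.exp (-(s*t)) * (t - τ) ^ (γ-1)) (Ioi τ) ∧
    ∫ t in Ioi τ, Real.exp (-(s*t)) * (t - τ) ^ (γ-1)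
      = Real.exp (-(s*τ)) * ((1/s) ^ γ * Real.Gamma γ) := by
  have hmp : MeasurePreserving (· + τ) (volume : Measure ℝ) volume :=
    measurePreserving_add_right volume τ
  have hemb : MeasurableEmbedding (· + τ : ℝ → ℝ) :=
    (MeasurableEquiv.addRight τ).measurableEmbedding
  have hpre : (· + τ : ℝ → ℝ) ⁻¹' (Ioi τ) = Ioi 0 := by
    ext x; simp
  have hint0 : IntegrableOn (fun u : ℝ => u ^ (γ-1) * Real.exp (-s * u)) (Ioi 0) := by
    have := integrableOn_rpow_mul_exp_neg_mul_rpow (s := γ-1) (p := 1) (b := s)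
      (by linarith) one_pos hs
    simpa using this
  have hcongr : ∀ u ∈ Ioi (0:ℝ),
      Real.exp (-(s*(u + τ))) * (u + τ - τ) ^ (γ-1)
        = Real.exp (-(s*τ)) * (u ^ (γ-1) * Real.exp (-(s*u))) := by
    intro u hu
    rw [add_sub_cancel_right]
    rw [show -(s*(u+τ)) = -(s*u) + -(s*τ) by ring, Real.exp_add]
    ring
  have hmp' : MeasurePreserving (· + τ) ((volume : Measure ℝ).restrict (Ioi 0))
      ((volume : Measure ℝ).restrict (Ioi τ)) := by
    have := hmp.restrict_preimage (s := Ioi τ) measurableSet_Ioi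
    rwa [hpre] at this
  constructor
  · rw [IntegrableOn, ← hmp'.integrable_comp_emb hemb]
    have heq : (fun t => Real.exp (-(s*t)) * (t - τ) ^ (γ-1)) ∘ (· + τ)
        = fun u => Real.exp (-(s*(u+τ))) * (u + τ - τ) ^ (γ-1) := rfl
    rw [heq]
    refine (hint0.const_mul (Real.exp (-(s*τ)))).congr ?_
    filter_upwards [ae_restrict_mem measurableSet_Ioi] with u hu
    simpa using (hcongr u hu).symm
  · have := hmp.setIntegral_preimage_emb hemb
      (fun t => Real.exp (-(s*t)) * (t - τ) ^ (γ-1)) (Ioi τ)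
    rw [← this, hpre,
      setIntegral_congr_fun measurableSet_Ioi hcongr,
      integral_const_mul, integral_rpow_mul_exp_neg_mul_Ioi hγ hs]

lemma aux_expint (f : ℝ → ℝ) (M c s : ℝ) (hfc : Continuous f)
    (hfb : ∀ t ≥ (0:ℝ), |f t| ≤ M * Real.exp (c*t)) (hcs : c < s) :
    IntegrableOn (fun t => Real.exp (-(s*t)) * f t) (Ioi 0) := by
  apply Integrable.mono' (g := fun t => M * Real.exp (-(s-c)*t))
      ((exp_neg_integrableOn_Ioi 0 (show 0 < s - c by linarith)).const_mul M)
  · exact ((Real.continuous_exp.comp (continuous_const.mul continuous_id).neg).mul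
      hfc).aestronglyMeasurable.restrict
  · filter_upwards [ae_restrict_mem measurableSet_Ioi] with t ht
    rw [norm_mul, Real.norm_eq_abs, Real.norm_eq_abs, abs_of_pos (Real.exp_pos _)]
    calc Real.exp (-(s*t)) * |f t| ≤ Real.exp (-(s*t)) * (M * Real.exp (c*t)) := by
          exact mul_le_mul_of_nonneg_left (hfb t ht.le) (Real.exp_pos _).le
    _ = M * Real.exp (-(s-c)*t) := by
          rw [show (-(s-c)*t) = -(s*t) + c*t by ring, Real.exp_add]; ring

theorem shehu_fracIntegral
    (γ : ℝ) (hγ : 0 < γ) (f : ℝ → ℝ) (M c : ℝ)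
    (hfc : Continuous f)
    (hfb : ∀ t ≥ (0:ℝ), |f t| ≤ M * Real.exp (c * t))
    (a h : ℝ) (ha : 0 < a) (hh : 0 < h) (hgt : c < a / h) :
    (∫ t in Ioi (0:ℝ),
        Real.exp (-(a * t) / h) *
          ((1 / Real.Gamma γ) * ∫ τ in (0:ℝ)..t, (t - τ) ^ (γ - 1) * f τ)) =
      (a / h) ^ (-γ) * ∫ t in Ioi (0:ℝ), Real.exp (-(a * t) / h) * f t := by
  set s := a / h with hs_def
  have hs : 0 < s := div_pos ha hh
  have hexp : ∀ t : ℝ, -(a*t)/h = -(s*t) := fun t => by rw [hs_def]; ring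
  simp only [hexp]
  set μ := (volume : Measure ℝ).restrict (Ioi 0) with hμ
  set C : ℝ := (1/s) ^ γ * Real.Gamma γ with hC
  set F : ℝ → ℝ → ℝ := fun t τ =>
    {p : ℝ × ℝ | p.2 < p.1}.indicator
      (fun p => Real.exp (-(s*p.1)) * (p.1 - p.2) ^ (γ-1) * f p.2) (t, τ) with hF
  -- slice representations
  have hFt : ∀ τ : ℝ, (fun t => F t τ)
      = (Ioi τ).indicator (fun t => Real.exp (-(s*t)) * (t-τ)^(γ-1) * f τ) := by
    intro τ; ext t
    by_cases hlt : τ < t <;> simp [hF, Set.indicator, hlt]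
  have hFτ : ∀ t : ℝ, (fun τ => F t τ)
      = (Iio t).indicator (fun τ => Real.exp (-(s*t)) * (t-τ)^(γ-1) * f τ) := by
    intro t; ext τ
    by_cases hlt : τ < t <;> simp [hF, Set.indicator, hlt]
  -- measurability
  have hGm : AEStronglyMeasurable (Function.uncurry F) (μ.prod μ) := by
    have : Measurable (Function.uncurry F) := by
      apply Measurable.indicator
      · exact (((measurable_const.mul measurable_fst).neg.exp).mul
          ((measurable_fst.sub measurable_snd).pow_const _ |>.comp measurable_id)).mul
          (hfc.measurable.comp measurable_snd)
      · exact measurableSet_lt measurable_snd measurable_fst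
    exact this.aestronglyMeasurable
  -- slice integrability
  have hslice : ∀ τ ∈ Ioi (0:ℝ), Integrable (fun t => F t τ) μ := by
    intro τ hτ
    rw [hFt τ, integrable_indicator_iff measurableSet_Ioi, IntegrableOn, hμ,
      Measure.restrict_restrict measurableSet_Ioi,
      Set.inter_eq_left.mpr (Ioi_subset_Ioi (le_of_lt hτ))]
    exact ((aux_int γ s τ hγ hs).1.mul_const _)
  -- exact value of inner t-integral
  have hval : ∀ τ ∈ Ioi (0:ℝ),
      ∫ t, F t τ ∂μ = (Real.exp (-(s*τ)) * C) * f τ := by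
    intro τ hτ
    rw [hFt τ, integral_indicator measurableSet_Ioi, hμ,
      Measure.restrict_restrict measurableSet_Ioi,
      Set.inter_eq_left.mpr (Ioi_subset_Ioi (le_of_lt hτ)),
      show (fun t => Real.exp (-(s*t)) * (t-τ)^(γ-1) * f τ)
        = fun t => (Real.exp (-(s*t)) * (t-τ)^(γ-1)) * f τ from rfl,
      integral_mul_const, (aux_int γ s τ hγ hs).2]
  -- exact value of norm integral
  have hnormval : ∀ τ ∈ Ioi (0:ℝ),
      ∫ t, ‖F t τ‖ ∂μ = (Real.exp (-(s*τ)) * C) * |f τ| := by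
    intro τ hτ
    have : (fun t => ‖F t τ‖)
        = (Ioi τ).indicator (fun t => ‖Real.exp (-(s*t)) * (t-τ)^(γ-1) * f τ‖) := by
      ext t; by_cases hlt : τ < t <;> simp [hF, Set.indicator, hlt]
    rw [this, integral_indicator measurableSet_Ioi, hμ,
      Measure.restrict_restrict measurableSet_Ioi,
      Set.inter_eq_left.mpr (Ioi_subset_Ioi (le_of_lt hτ))]
    rw [setIntegral_congr_fun measurableSet_Ioi
      (g := fun t => (Real.exp (-(s*t)) * (t-τ)^(γ-1)) * |f τ|) ?_]
    · rw [integral_mul_const, (aux_int γ s τ hγ hs).2]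
    · intro t ht
      simp only [norm_mul, Real.norm_eq_abs]
      rw [abs_of_pos (Real.exp_pos _),
        abs_of_nonneg (Real.rpow_nonneg (by simp at ht ⊢; linarith) _)]
  -- integrability of norm integral
  have hnorm : Integrable (fun τ => ∫ t, ‖F t τ‖ ∂μ) μ := by
    have habs : IntegrableOn (fun τ => Real.exp (-(s*τ)) * |f τ|) (Ioi 0) :=
      aux_expint (fun τ => |f τ|) M c s hfc.abs (fun t ht => by
        simpa using hfb t ht) hgt
    refine ((habs.const_mul C).congr ?_)
    filter_upwards [ae_restrict_mem measurableSet_Ioi] with τ hτ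
    rw [hnormval τ hτ]; ring
  -- product integrability
  have hFint : Integrable (Function.uncurry F) (μ.prod μ) := by
    rw [MeasureTheory.integrable_prod_iff' hGm]
    exact ⟨ae_restrict_of_forall_mem measurableSet_Ioi hslice, hnorm⟩
  -- Fubini
  have hswap := MeasureTheory.integral_integral_swap hFint
  -- inner τ-integral equals interval integral form
  have hinner : ∀ t ∈ Ioi (0:ℝ),
      ∫ τ, F t τ ∂μ = Real.exp (-(s*t)) * ∫ τ in (0:ℝ)..t, (t-τ)^(γ-1) * f τ := by
    intro t ht
    rw [hFτ t, integral_indicator measurableSet_Iio, hμ,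
      Measure.restrict_restrict measurableSet_Iio, Set.Iio_inter_Ioi,
      show (fun τ => Real.exp (-(s*t)) * (t-τ)^(γ-1) * f τ)
        = fun τ => Real.exp (-(s*t)) * ((t-τ)^(γ-1) * f τ) from by
          funext τ; ring,
      integral_const_mul, intervalIntegral.integral_of_le (le_of_lt ht),
      ← integral_Ioc_eq_integral_Ioo]
  -- assemble
  have hΓ : Real.Gamma γ ≠ 0 := ne_of_gt (Real.Gamma_pos_of_pos hγ)
  calc (∫ t in Ioi (0:ℝ), Real.exp (-(s*t)) *
          ((1 / Real.Gamma γ) * ∫ τ in (0:ℝ)..t, (t - τ) ^ (γ - 1) * f τ))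
      = ∫ t, (1 / Real.Gamma γ) * ∫ τ, F t τ ∂μ ∂μ := by
        refine setIntegral_congr_fun measurableSet_Ioi (fun t ht => ?_)
        rw [hinner t ht]; ring
    _ = (1 / Real.Gamma γ) * ∫ t, ∫ τ, F t τ ∂μ ∂μ := integral_const_mul _ _
    _ = (1 / Real.Gamma γ) * ∫ τ, ∫ t, F t τ ∂μ ∂μ := by rw [hswap]
    _ = (1 / Real.Gamma γ) * ∫ τ, (Real.exp (-(s*τ)) * f τ) * C ∂μ := by
        congr 1
        refine setIntegral_congr_fun measurableSet_Ioi (fun τ hτ => ?_)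
        rw [hval τ hτ]; ring
    _ = (1 / Real.Gamma γ) * ((∫ τ, Real.exp (-(s*τ)) * f τ ∂μ) * C) := by
        rw [integral_mul_const]
    _ = s ^ (-γ) * ∫ t in Ioi (0:ℝ), Real.exp (-(s*t)) * f t := by
        rw [hC, show ((1:ℝ)/s) ^ γ = s ^ (-γ) by
          rw [one_div, Real.rpow_neg hs.le, Real.inv_rpow hs.le]]
        field_simp
        ring
end

section
/- Let f : ℝ → ℝ be continuously differentiable with f and f' of exponential order with bound c, and let a, h > 0 with a/h > c. Then the Shehu transform of f' satisfies H(f')(a,h) = (a/h)·H(f)(a,h) − f(0). -/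
open MeasureTheory Real Set

theorem shehu_deriv
    (f : ℝ → ℝ) (M c : ℝ)
    (hf : ContDiff ℝ 1 f)
    (hfb : ∀ t ≥ (0:ℝ), |f t| ≤ M * Real.exp (c * t))
    (hfb' : ∀ t ≥ (0:ℝ), |deriv f t| ≤ M * Real.exp (c * t))
    (a h : ℝ) (ha : 0 < a) (hh : 0 < h) (hgt : c < a / h) :
    (∫ t in Ioi (0:ℝ), Real.exp (-(a * t) / h) * deriv f t) =
      (a / h) * (∫ t in Ioi (0:ℝ), Real.exp (-(a * t) / h) * f t) - f 0 := by
  set s := a / h with hs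
  have hs0 : 0 < s := div_pos ha hh
  have hsc : 0 < s - c := sub_pos.2 hgt
  have hrw : ∀ t : ℝ, -(a * t) / h = -(s * t) := by
    intro t; rw [hs]; field_simp
  have hfc : Continuous f := hf.continuous
  have hf'c : Continuous (deriv f) := hf.continuous_deriv le_rfl
  have hMnn : (0:ℝ) ≤ M := le_trans (abs_nonneg _) (by simpa using hfb 0 le_rfl)
  -- generic integrability lemma
  have key : ∀ u : ℝ → ℝ, Continuous u → (∀ t ≥ (0:ℝ), |u t| ≤ M * Real.exp (c * t)) →
      IntegrableOn (fun t => Real.exp (-(s * t)) * u t) (Ioi 0) := by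
    intro u hu hub
    apply Integrable.mono ((exp_neg_integrableOn_Ioi 0 hsc).const_mul M)
    · exact ((Real.continuous_exp.comp (continuous_const.mul continuous_id).neg).mul hu).aestronglyMeasurable
    · filter_upwards [ae_restrict_mem measurableSet_Ioi] with t ht
      have ht0 : (0:ℝ) ≤ t := le_of_lt ht
      have h1 : |Real.exp (-(s * t)) * u t| ≤ Real.exp (-(s * t)) * (M * Real.exp (c * t)) := by
        rw [abs_mul, abs_of_pos (Real.exp_pos _)]
        exact mul_le_mul_of_nonneg_left (hub t ht0) (Real.exp_pos _).le
      refine h1.trans (le_of_eq ?_)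
      rw [Real.norm_eq_abs, abs_of_nonneg (mul_nonneg hMnn (Real.exp_pos _).le),
        mul_left_comm, ← Real.exp_add]
      congr 2
      ring
  have hint1 : IntegrableOn (fun t => Real.exp (-(s * t)) * f t) (Ioi 0) := key f hfc hfb
  have hint2 : IntegrableOn (fun t => Real.exp (-(s * t)) * deriv f t) (Ioi 0) := key _ hf'c hfb'
  -- the product function and its derivative
  set g : ℝ → ℝ := fun t => Real.exp (-(s * t)) * f t with hg
  have hderiv : ∀ t : ℝ, HasDerivAt g
      (Real.exp (-(s * t)) * deriv f t - s * (Real.exp (-(s * t)) * f t)) t := by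
    intro t
    have h1 : HasDerivAt (fun t : ℝ => Real.exp (-(s * t))) (-s * Real.exp (-(s * t))) t := by
      have h2 : HasDerivAt (fun t : ℝ => -(s * t)) (-s) t := by
        have h4 := (((hasDerivAt_id t).const_mul s).neg : HasDerivAt (fun t : ℝ => -(s * id t)) (-(s * 1)) t)
        rw [mul_one] at h4
        exact h4
      simpa [mul_comm] using h2.exp
    have h3 : HasDerivAt f (deriv f t) t := (hf.differentiable (by norm_num) t).hasDerivAt
    have := h1.mul h3
    refine this.congr_deriv ?_
    ring
  -- limit at infinity
  have hlim : Filter.Tendsto g Filter.atTop (nhds 0) := by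
    have hbound : ∀ᶠ t in Filter.atTop, |g t| ≤ M * Real.exp (-(s - c) * t) := by
      filter_upwards [Filter.eventually_ge_atTop (0:ℝ)] with t ht
      rw [hg]
      have : |Real.exp (-(s * t)) * f t| ≤ Real.exp (-(s * t)) * (M * Real.exp (c * t)) := by
        rw [abs_mul, abs_of_pos (Real.exp_pos _)]
        exact mul_le_mul_of_nonneg_left (hfb t ht) (Real.exp_pos _).le
      refine this.trans (le_of_eq ?_)
      rw [mul_left_comm, ← Real.exp_add]
      congr 2
      ring
    have htend : Filter.Tendsto (fun t => M * Real.exp (-(s - c) * t)) Filter.atTop (nhds 0) := by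
      have : Filter.Tendsto (fun t : ℝ => Real.exp (-(s - c) * t)) Filter.atTop (nhds 0) :=
        Real.tendsto_exp_atBot.comp (Filter.tendsto_id.const_mul_atTop_of_neg (by linarith))
      simpa using this.const_mul M
    have habs : Filter.Tendsto (fun t => |g t|) Filter.atTop (nhds 0) :=
      squeeze_zero' (Filter.Eventually.of_forall fun t => abs_nonneg _) hbound htend
    exact (tendsto_zero_iff_abs_tendsto_zero g).2 habs
  -- FTC
  have hFTC := integral_Ioi_of_hasDerivAt_of_tendsto
    (f := g) (f' := fun t => Real.exp (-(s * t)) * deriv f t - s * (Real.exp (-(s * t)) * f t))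
    (a := 0) (m := 0)
    ((hderiv 0).continuousAt.continuousWithinAt)
    (fun x _ => hderiv x) (hint2.sub (hint1.const_mul s)) hlim
  rw [integral_sub hint2 (hint1.const_mul s)] at hFTC
  rw [integral_const_mul] at hFTC
  have hg0 : g 0 = f 0 := by simp [hg]
  have : (∫ t in Ioi (0:ℝ), Real.exp (-(s * t)) * deriv f t) =
      s * (∫ t in Ioi (0:ℝ), Real.exp (-(s * t)) * f t) - f 0 := by
    rw [hg0] at hFTC; linarith
  simpa only [hrw] using this
end

section
/- Let 0 < γ < 1 and f : ℝ → ℝ be C¹ with f, f' of exponential order. The Caputo fractional derivative D^γ f(t) = (1/Γ(1-γ)) ∫₀^t (t-τ)^{-γ} f'(τ) dτ satisfies H(D^γ f)(a,h) = (a/h)^γ · H(f)(a,h) − (a/h)^{γ-1} · f(0) for a/h sufficiently large. -/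
open MeasureTheory Real Set Filter

namespace ShehuAux

/-- Integrability of `exp(-st) * g t` on `Ioi 0` for `g` of exponential order `c < s`. -/
lemma expMulIntegrable {g : ℝ → ℝ} (hg : Continuous g) {M c s : ℝ}
    (hb : ∀ t ≥ (0:ℝ), |g t| ≤ M * Real.exp (c * t)) (hs : c < s) :
    IntegrableOn (fun t => Real.exp (-(s * t)) * g t) (Ioi (0:ℝ)) := by
  have hint : IntegrableOn (fun t => M * Real.exp (-(s - c) * t)) (Ioi (0:ℝ)) :=
    (exp_neg_integrableOn_Ioi 0 (by linarith)).const_mul M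
  refine Integrable.mono' hint ?_ ?_
  · exact ((Real.continuous_exp.comp (by continuity)).mul hg).aestronglyMeasurable.restrict
  · filter_upwards [ae_restrict_mem measurableSet_Ioi] with t ht
    have h1 : |g t| ≤ M * Real.exp (c * t) := hb t (le_of_lt ht)
    have h2 : ‖Real.exp (-(s*t)) * g t‖ = Real.exp (-(s*t)) * |g t| := by
      rw [Real.norm_eq_abs, abs_mul, abs_of_pos (Real.exp_pos _)]
    rw [h2]
    calc Real.exp (-(s*t)) * |g t| ≤ Real.exp (-(s*t)) * (M * Real.exp (c*t)) :=
          mul_le_mul_of_nonneg_left h1 (Real.exp_pos _).le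
      _ = M * (Real.exp (-(s*t)) * Real.exp (c*t)) := by ring
      _ = M * Real.exp (-(s-c)*t) := by
          rw [← Real.exp_add, show -(s*t) + c*t = -(s-c)*t by ring]

lemma integrableOn_shift {F : ℝ → ℝ} {τ : ℝ}
    (h : IntegrableOn (fun u => F (u + τ)) (Ioi (0:ℝ))) :
    IntegrableOn F (Ioi τ) := by
  have hemb : MeasurableEmbedding (fun u : ℝ => u + τ) :=
    (MeasurableEquiv.addRight τ).measurableEmbedding
  have hmp : MeasurePreserving (fun u : ℝ => u + τ) volume volume :=
    measurePreserving_add_right volume τ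
  have h2 := (hemb.integrableOn_map_iff (f := F) (μ := volume) (s := Ioi τ))
  rw [hmp.map_eq] at h2
  rw [h2]
  have : (fun u : ℝ => u + τ) ⁻¹' (Ioi τ) = Ioi 0 := by
    rw [preimage_add_const_Ioi]; simp
  rw [this]
  exact h

lemma integral_shift (F : ℝ → ℝ) (τ : ℝ) :
    ∫ t in Ioi τ, F t = ∫ u in Ioi (0:ℝ), F (u + τ) := by
  have hemb : MeasurableEmbedding (fun u : ℝ => u + τ) :=
    (MeasurableEquiv.addRight τ).measurableEmbedding
  have hmp : MeasurePreserving (fun u : ℝ => u + τ) volume volume :=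
    measurePreserving_add_right volume τ
  have h := hmp.setIntegral_image_emb hemb F (Ioi 0)
  have himg : (fun u : ℝ => u + τ) '' Ioi 0 = Ioi τ := by
    ext x
    simp only [mem_image, mem_Ioi]
    constructor
    · rintro ⟨u, hu, rfl⟩; linarith
    · intro hx; exact ⟨x - τ, by linarith, by ring⟩
  rw [himg] at h
  exact h

lemma integrableOn_exp_rpow {γ s : ℝ} (hγ1 : γ < 1) (hs : 0 < s) :
    IntegrableOn (fun u => Real.exp (-(s * u)) * u ^ (-γ)) (Ioi (0:ℝ)) := by
  have h1 : IntegrableOn (fun x : ℝ => Real.exp (-x) * x ^ ((1-γ) - 1)) (Ioi 0) :=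
    Real.GammaIntegral_convergent (by linarith)
  have h2 : IntegrableOn (fun x : ℝ => Real.exp (-(s*x)) * (s*x) ^ ((1-γ)-1)) (Ioi 0) := by
    have h3 := (integrableOn_Ioi_comp_mul_left_iff
      (fun x : ℝ => Real.exp (-x) * x ^ ((1-γ)-1)) 0 hs).2
    simpa using h3 (by simpa using h1)
  have h3 : IntegrableOn (fun x : ℝ => s ^ (-γ) * (Real.exp (-(s*x)) * x ^ (-γ))) (Ioi 0) := by
    apply h2.congr_fun ?_ measurableSet_Ioi
    intro x hx
    simp only [show (1-γ)-1 = -γ from by ring, Real.mul_rpow hs.le (le_of_lt hx)]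
    ring
  have h4 : IntegrableOn
      (fun x : ℝ => s ^ γ * (s ^ (-γ) * (Real.exp (-(s*x)) * x ^ (-γ)))) (Ioi 0) :=
    h3.const_mul (s ^ γ)
  apply h4.congr_fun ?_ measurableSet_Ioi
  intro x _
  have hone : s ^ γ * s ^ (-γ) = 1 := by
    rw [← Real.rpow_add hs]; simp
  simp only [← mul_assoc, hone, one_mul]

lemma integral_exp_rpow {γ s : ℝ} (hγ1 : γ < 1) (hs : 0 < s) :
    ∫ u in Ioi (0:ℝ), Real.exp (-(s*u)) * u ^ (-γ) = Real.Gamma (1-γ) * s ^ (γ-1) := by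
  have h := Real.integral_rpow_mul_exp_neg_mul_Ioi (show (0:ℝ) < 1-γ by linarith) hs
  rw [show (1-γ)-1 = -γ by ring] at h
  calc ∫ u in Ioi (0:ℝ), Real.exp (-(s*u)) * u ^ (-γ)
      = ∫ t in Ioi (0:ℝ), t ^ (-γ) * Real.exp (-(s*t)) :=
        setIntegral_congr_fun measurableSet_Ioi (fun x _ => by ring)
    _ = (1/s) ^ (1-γ) * Real.Gamma (1-γ) := h
    _ = Real.Gamma (1-γ) * s ^ (γ-1) := by
        rw [one_div, Real.inv_rpow hs.le, show γ-1 = -(1-γ) by ring,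
          Real.rpow_neg hs.le, mul_comm]

/-- Laplace transform of the derivative. -/
lemma laplace_deriv (f : ℝ → ℝ) {M c s : ℝ} (hf : ContDiff ℝ 1 f)
    (hfb : ∀ t ≥ (0:ℝ), |f t| ≤ M * Real.exp (c * t))
    (hfb' : ∀ t ≥ (0:ℝ), |deriv f t| ≤ M * Real.exp (c * t))
    (hs : c < s) :
    ∫ t in Ioi (0:ℝ), Real.exp (-(s*t)) * deriv f t
      = s * (∫ t in Ioi (0:ℝ), Real.exp (-(s*t)) * f t) - f 0 := by
  have hfc : Continuous f := hf.continuous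
  have hfd : Continuous (deriv f) := hf.continuous_deriv le_rfl
  have hdiff : Differentiable ℝ f := hf.differentiable one_ne_zero
  set g : ℝ → ℝ := fun t => Real.exp (-(s*t)) * f t with hg
  have hgd : ∀ x : ℝ, HasDerivAt g
      (Real.exp (-(s*x)) * deriv f x - s * (Real.exp (-(s*x)) * f x)) x := by
    intro x
    have h0 : HasDerivAt (fun t : ℝ => -(s*t)) (-s) x := by
      simpa using ((hasDerivAt_id x).const_mul (-s))
    have h1 : HasDerivAt (fun t : ℝ => Real.exp (-(s*t))) (-s * Real.exp (-(s*x))) x := by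
      simpa [mul_comm] using h0.exp
    have h2 := (hdiff x).hasDerivAt
    have h3 := h1.fun_mul h2
    rw [show Real.exp (-(s*x)) * deriv f x - s * (Real.exp (-(s*x)) * f x) = -s * Real.exp (-(s*x)) * f x + Real.exp (-(s*x)) * deriv f x by ring]
    exact h3
  have hI1 : IntegrableOn (fun t => Real.exp (-(s*t)) * deriv f t) (Ioi (0:ℝ)) :=
    expMulIntegrable hfd hfb' hs
  have hI2 : IntegrableOn (fun t => Real.exp (-(s*t)) * f t) (Ioi (0:ℝ)) :=
    expMulIntegrable hfc hfb hs
  have hI : IntegrableOn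
      (fun t => Real.exp (-(s*t)) * deriv f t - s * (Real.exp (-(s*t)) * f t)) (Ioi (0:ℝ)) :=
    hI1.sub (hI2.const_mul s)
  have htend : Tendsto g atTop (nhds 0) := by
    apply squeeze_zero_norm' (a := fun t => M * Real.exp ((c-s)*t))
    · filter_upwards [eventually_ge_atTop (0:ℝ)] with t ht
      have h1 : |f t| ≤ M * Real.exp (c * t) := hfb t ht
      have h2 : ‖g t‖ = Real.exp (-(s*t)) * |f t| := by
        rw [hg, Real.norm_eq_abs, abs_mul, abs_of_pos (Real.exp_pos _)]
      rw [h2]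
      calc Real.exp (-(s*t)) * |f t| ≤ Real.exp (-(s*t)) * (M * Real.exp (c*t)) :=
            mul_le_mul_of_nonneg_left h1 (Real.exp_pos _).le
        _ = M * (Real.exp (-(s*t)) * Real.exp (c*t)) := by ring
        _ = M * Real.exp ((c-s)*t) := by
            rw [← Real.exp_add, show -(s*t) + c*t = (c-s)*t by ring]
    · have ha : Tendsto (fun t : ℝ => (s-c)*t) atTop atTop :=
        Tendsto.const_mul_atTop (by linarith) tendsto_id
      have hb := Real.tendsto_exp_neg_atTop_nhds_zero.comp ha
      have hb' : Tendsto (fun t : ℝ => Real.exp ((c-s)*t)) atTop (nhds 0) := by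
        refine hb.congr fun t => ?_
        simp [Function.comp, show -((s-c)*t) = (c-s)*t by ring]
      simpa using hb'.const_mul M
  have key := integral_Ioi_of_hasDerivAt_of_tendsto (a := (0:ℝ)) (m := 0)
    ((hgd 0).continuousAt.continuousWithinAt) (fun x _ => hgd x) hI htend
  have hg0 : g 0 = f 0 := by simp [hg]
  rw [integral_sub hI1 (hI2.const_mul s), integral_const_mul, hg0] at key
  linarith

/-- Laplace transform of a convolution with `u ^ (-γ)` factorizes. -/
lemma fubini_conv (γ : ℝ) (hγ1 : γ < 1) {φ : ℝ → ℝ} (hφ : Continuous φ)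
    {M c s : ℝ} (hb : ∀ t ≥ (0:ℝ), |φ t| ≤ M * Real.exp (c*t)) (hs : c < s) (hs0 : 0 < s) :
    ∫ t in Ioi (0:ℝ), Real.exp (-(s*t)) * (∫ τ in (0:ℝ)..t, (t-τ)^(-γ) * φ τ)
      = (∫ u in Ioi (0:ℝ), Real.exp (-(s*u)) * u^(-γ))
          * ∫ τ in Ioi (0:ℝ), Real.exp (-(s*τ)) * φ τ := by
  set K : ℝ := ∫ u in Ioi (0:ℝ), Real.exp (-(s*u)) * u^(-γ) with hK
  have hKint : IntegrableOn (fun u => Real.exp (-(s*u)) * u^(-γ)) (Ioi (0:ℝ)) :=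
    integrableOn_exp_rpow hγ1 hs0
  set G : ℝ → ℝ → ℝ := fun t τ =>
    (Ioi τ).indicator (fun t' => Real.exp (-(s*t')) * (t'-τ)^(-γ)) t * φ τ with hGdef
  have hshiftfun : ∀ τ : ℝ, (fun u : ℝ => Real.exp (-(s*(u+τ))) * (u+τ-τ)^(-γ))
      = fun u : ℝ => Real.exp (-(s*τ)) * (Real.exp (-(s*u)) * u^(-γ)) := by
    intro τ; funext u
    rw [show u+τ-τ = u by ring, show -(s*(u+τ)) = -(s*u) + -(s*τ) by ring, Real.exp_add]
    ring
  have hshiftInt : ∀ τ : ℝ,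
      IntegrableOn (fun t => Real.exp (-(s*t)) * (t-τ)^(-γ)) (Ioi τ) := by
    intro τ
    refine integrableOn_shift ?_
    have h2 : IntegrableOn
        (fun u : ℝ => Real.exp (-(s*τ)) * (Real.exp (-(s*u)) * u^(-γ))) (Ioi (0:ℝ)) :=
      hKint.const_mul _
    exact IntegrableOn.congr_fun h2
      (fun u _ => (congrFun (hshiftfun τ) u).symm) measurableSet_Ioi
  have hIoiVal : ∀ τ : ℝ,
      ∫ t in Ioi τ, Real.exp (-(s*t)) * (t-τ)^(-γ) = Real.exp (-(s*τ)) * K := by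
    intro τ
    rw [integral_shift]
    calc ∫ u in Ioi (0:ℝ), Real.exp (-(s*(u+τ))) * (u+τ-τ)^(-γ)
        = ∫ u in Ioi (0:ℝ), Real.exp (-(s*τ)) * (Real.exp (-(s*u)) * u^(-γ)) := by
          rw [hshiftfun τ]
      _ = Real.exp (-(s*τ)) * K := by rw [integral_const_mul]
  have hindVal : ∀ τ : ℝ, 0 < τ →
      ∫ t in Ioi (0:ℝ), (Ioi τ).indicator (fun t' => Real.exp (-(s*t')) * (t'-τ)^(-γ)) t
        = Real.exp (-(s*τ)) * K := by
    intro τ hτ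
    rw [setIntegral_indicator measurableSet_Ioi, Ioi_inter_Ioi, sup_eq_right.2 hτ.le]
    exact hIoiVal τ
  have hindInt : ∀ τ : ℝ, Integrable
      ((Ioi τ).indicator (fun t' => Real.exp (-(s*t')) * (t'-τ)^(-γ)))
      (volume.restrict (Ioi (0:ℝ))) := fun τ =>
    ((integrable_indicator_iff measurableSet_Ioi).2 (hshiftInt τ)).integrableOn
  have hindnn : ∀ τ t : ℝ,
      0 ≤ (Ioi τ).indicator (fun t' => Real.exp (-(s*t')) * (t'-τ)^(-γ)) t := by
    intro τ t
    apply Set.indicator_nonneg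
    intro x hx
    simp only [mem_Ioi] at hx
    exact mul_nonneg (Real.exp_pos _).le (Real.rpow_nonneg (by linarith) _)
  have hGm : AEStronglyMeasurable (Function.uncurry G)
      ((volume.restrict (Ioi (0:ℝ))).prod (volume.restrict (Ioi (0:ℝ)))) := by
    have hGeq : Function.uncurry G = fun p : ℝ × ℝ =>
        {q : ℝ × ℝ | q.2 < q.1}.indicator
          (fun q => Real.exp (-(s*q.1)) * (q.1-q.2)^(-γ)) p * φ p.2 := by
      funext p
      simp only [Function.uncurry, hGdef, Set.indicator_apply, mem_Ioi, mem_setOf_eq]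
    rw [hGeq]
    apply Measurable.aestronglyMeasurable
    refine Measurable.mul (Measurable.indicator (by fun_prop)
      (measurableSet_lt measurable_snd measurable_fst)) (hφ.measurable.comp measurable_snd)
  have hGnorm : ∀ τ : ℝ, 0 < τ →
      ∫ t in Ioi (0:ℝ), ‖G t τ‖ = (Real.exp (-(s*τ)) * K) * |φ τ| := by
    intro τ hτ
    have h1 : ∀ t : ℝ, ‖G t τ‖ =
        (Ioi τ).indicator (fun t' => Real.exp (-(s*t')) * (t'-τ)^(-γ)) t * |φ τ| := by
      intro t
      rw [hGdef]
      simp only [Real.norm_eq_abs, abs_mul, abs_of_nonneg (hindnn τ t)]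
    simp only [h1]
    rw [integral_mul_const, hindVal τ hτ]
  have hGint : Integrable (Function.uncurry G)
      ((volume.restrict (Ioi (0:ℝ))).prod (volume.restrict (Ioi (0:ℝ)))) := by
    rw [integrable_prod_iff' hGm]
    constructor
    · filter_upwards [ae_restrict_mem measurableSet_Ioi] with τ hτ
      exact (hindInt τ).mul_const (φ τ)
    · have h1 : IntegrableOn (fun τ => Real.exp (-(s*τ)) * |φ τ|) (Ioi (0:ℝ)) :=
        expMulIntegrable (continuous_abs.comp hφ)
          (fun t ht => by simpa [abs_abs] using hb t ht) hs
      have h2 : IntegrableOn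
          (fun τ => (Real.exp (-(s*τ)) * K) * |φ τ|) (Ioi (0:ℝ)) := by
        have h1' : IntegrableOn (fun τ => Real.exp (-(s*τ)) * |φ τ| * K) (Ioi (0:ℝ)) :=
          h1.mul_const K
        exact IntegrableOn.congr_fun h1' (fun τ _ => by ring) measurableSet_Ioi
      apply h2.congr
      filter_upwards [ae_restrict_mem measurableSet_Ioi] with τ hτ
      exact (hGnorm τ hτ).symm
  have step1 : ∫ t in Ioi (0:ℝ), Real.exp (-(s*t)) * (∫ τ in (0:ℝ)..t, (t-τ)^(-γ) * φ τ)
      = ∫ t in Ioi (0:ℝ), ∫ τ in Ioi (0:ℝ), G t τ := by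
    refine setIntegral_congr_fun measurableSet_Ioi fun t ht => ?_
    simp only [mem_Ioi] at ht
    have h1 : ∀ τ : ℝ, G t τ =
        (Iio t).indicator (fun τ' => Real.exp (-(s*t)) * (t-τ')^(-γ) * φ τ') τ := by
      intro τ
      simp only [hGdef, Set.indicator_apply, mem_Ioi, mem_Iio, ite_mul, zero_mul]
    calc Real.exp (-(s*t)) * ∫ τ in (0:ℝ)..t, (t-τ)^(-γ) * φ τ
        = Real.exp (-(s*t)) * ∫ τ in Ioo (0:ℝ) t, (t-τ)^(-γ) * φ τ := by
          rw [intervalIntegral.integral_of_le (le_of_lt ht), integral_Ioc_eq_integral_Ioo]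
      _ = ∫ τ in Ioo (0:ℝ) t, Real.exp (-(s*t)) * ((t-τ)^(-γ) * φ τ) := by
          rw [integral_const_mul]
      _ = ∫ τ in Ioi (0:ℝ),
            (Iio t).indicator (fun τ' => Real.exp (-(s*t)) * (t-τ')^(-γ) * φ τ') τ := by
          rw [setIntegral_indicator measurableSet_Iio, Ioi_inter_Iio]
          exact setIntegral_congr_fun measurableSet_Ioo fun τ _ => by ring
      _ = ∫ τ in Ioi (0:ℝ), G t τ :=
          setIntegral_congr_fun measurableSet_Ioi fun τ _ => (h1 τ).symm
  have hswap : ∫ t in Ioi (0:ℝ), ∫ τ in Ioi (0:ℝ), G t τ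
      = ∫ τ in Ioi (0:ℝ), ∫ t in Ioi (0:ℝ), G t τ :=
    integral_integral_swap hGint
  have step3 : ∫ τ in Ioi (0:ℝ), ∫ t in Ioi (0:ℝ), G t τ
      = K * ∫ τ in Ioi (0:ℝ), Real.exp (-(s*τ)) * φ τ := by
    calc ∫ τ in Ioi (0:ℝ), ∫ t in Ioi (0:ℝ), G t τ
        = ∫ τ in Ioi (0:ℝ), K * (Real.exp (-(s*τ)) * φ τ) := by
          refine setIntegral_congr_fun measurableSet_Ioi fun τ hτ => ?_
          simp only [mem_Ioi] at hτ
          show (∫ t in Ioi (0:ℝ), G t τ) = K * (Real.exp (-(s*τ)) * φ τ)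
          simp only [hGdef]
          rw [integral_mul_const, hindVal τ hτ]
          ring
      _ = K * ∫ τ in Ioi (0:ℝ), Real.exp (-(s*τ)) * φ τ := integral_const_mul K _
  rw [step1, hswap, step3]

end ShehuAux

theorem shehu_caputo
    (γ : ℝ) (hγ0 : 0 < γ) (hγ1 : γ < 1) (f : ℝ → ℝ) (M c : ℝ)
    (hf : ContDiff ℝ 1 f)
    (hfb : ∀ t ≥ (0:ℝ), |f t| ≤ M * Real.exp (c * t))
    (hfb' : ∀ t ≥ (0:ℝ), |deriv f t| ≤ M * Real.exp (c * t)) :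
    ∃ s₀ : ℝ, ∀ a h : ℝ, 0 < a → 0 < h → s₀ < a / h →
      (∫ t in Ioi (0:ℝ),
          Real.exp (-(a * t) / h) *
            ((1 / Real.Gamma (1 - γ)) *
              ∫ τ in (0:ℝ)..t, (t - τ) ^ (-γ) * deriv f τ)) =
        (a / h) ^ γ * (∫ t in Ioi (0:ℝ), Real.exp (-(a * t) / h) * f t) -
          (a / h) ^ (γ - 1) * f 0 := by
  refine ⟨max c 0, fun a h ha hh hs' => ?_⟩
  set s : ℝ := a / h with hsdef
  have hs0 : 0 < s := lt_of_le_of_lt (le_max_right c 0) hs'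
  have hsc : c < s := lt_of_le_of_lt (le_max_left c 0) hs'
  have hΓ : 0 < Real.Gamma (1-γ) := Real.Gamma_pos_of_pos (by linarith)
  have hrw : ∀ t : ℝ, -(a * t) / h = -(s * t) := by
    intro t; rw [hsdef]; field_simp
  simp only [hrw]
  have hφ : Continuous (deriv f) := hf.continuous_deriv le_rfl
  have hconv := ShehuAux.fubini_conv γ hγ1 hφ hfb' hsc hs0
  have hlap := ShehuAux.laplace_deriv f hf hfb hfb' hsc
  have hKval := ShehuAux.integral_exp_rpow hγ1 hs0
  have hsγ : s ^ (γ-1) * s = s ^ γ := by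
    nth_rewrite 2 [← Real.rpow_one s]
    rw [← Real.rpow_add hs0]
    ring_nf
  calc ∫ t in Ioi (0:ℝ), Real.exp (-(s*t)) *
          ((1 / Real.Gamma (1-γ)) * ∫ τ in (0:ℝ)..t, (t-τ)^(-γ) * deriv f τ)
      = (1 / Real.Gamma (1-γ)) * ∫ t in Ioi (0:ℝ),
          Real.exp (-(s*t)) * ∫ τ in (0:ℝ)..t, (t-τ)^(-γ) * deriv f τ := by
        rw [← integral_const_mul]
        exact setIntegral_congr_fun measurableSet_Ioi fun t _ => by ring
    _ = (1 / Real.Gamma (1-γ)) * (Real.Gamma (1-γ) * s^(γ-1) *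
          (s * (∫ t in Ioi (0:ℝ), Real.exp (-(s*t)) * f t) - f 0)) := by
        rw [hconv, hKval, hlap]
    _ = s ^ γ * (∫ t in Ioi (0:ℝ), Real.exp (-(s*t)) * f t) - s^(γ-1) * f 0 := by
        rw [one_div, ← mul_assoc, ← mul_assoc, inv_mul_cancel₀ hΓ.ne', one_mul, ← hsγ]
        ring
end

section
/- Let γ > 0 and f(x,y,t) be continuous of exponential order in all variables. The triple Shehu transform of the partial Riemann-Liouville fractional integral in t, (I_t^γ f)(x,y,t) = (1/Γ(γ)) ∫₀^t (t-τ)^{γ-1} f(x,y,τ) dτ, satisfies H₃(I_t^γ f) = (c/l)^{-γ} · H₃(f). -/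
open MeasureTheory Real Set

private lemma key_shehu {γ s c₀ C : ℝ} (hγ : 0 < γ) (hs0 : 0 < s) (hs : c₀ < s)
    {g : ℝ → ℝ} (hg : Continuous g) (hbd : ∀ t ≥ (0:ℝ), |g t| ≤ C * Real.exp (c₀ * t)) :
    (∫ t in Ioi (0:ℝ), Real.exp (-(s * t)) *
        ((1 / Real.Gamma γ) * ∫ τ in (0:ℝ)..t, (t - τ) ^ (γ - 1) * g τ)) =
      s ^ (-γ) * ∫ t in Ioi (0:ℝ), Real.exp (-(s * t)) * g t := by
  set F : ℝ → ℝ := fun τ => Real.exp (-(s * τ)) * g τ with hF_def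
  set G : ℝ → ℝ := fun u => u ^ (γ - 1) * Real.exp (-(s * u)) with hG_def
  have hF : IntegrableOn F (Ioi (0:ℝ)) := by
    apply Integrable.mono' (((exp_neg_integrableOn_Ioi 0 (sub_pos.mpr hs))).const_mul C)
    · exact ((Real.continuous_exp.comp (continuous_const.mul continuous_id).neg).mul hg).aestronglyMeasurable
    · filter_upwards [ae_restrict_mem measurableSet_Ioi] with t ht
      have ht' : (0:ℝ) ≤ t := le_of_lt ht
      have h1 : ‖F t‖ = Real.exp (-(s * t)) * |g t| := by
        rw [norm_eq_abs, abs_mul, abs_of_pos (Real.exp_pos _)]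
      rw [h1]
      have h2 : Real.exp (-(s * t)) * |g t| ≤ Real.exp (-(s * t)) * (C * Real.exp (c₀ * t)) :=
        mul_le_mul_of_nonneg_left (hbd t ht') (Real.exp_pos _).le
      refine h2.trans (le_of_eq ?_)
      rw [mul_left_comm, ← Real.exp_add]
      congr 2
      ring
  have hG : IntegrableOn G (Ioi (0:ℝ)) := by
    have := integrableOn_rpow_mul_exp_neg_mul_rpow (p := 1) (s := γ - 1) (b := s)
      (by linarith) zero_lt_one hs0
    simpa [Real.rpow_one, neg_mul] using this
  have conv := integral_posConvolution hF hG (ContinuousLinearMap.mul ℝ ℝ)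
  simp only [ContinuousLinearMap.mul_apply'] at conv
  have hGint : (∫ u in Ioi (0:ℝ), G u) = (1 / s) ^ γ * Real.Gamma γ :=
    integral_rpow_mul_exp_neg_mul_Ioi hγ hs0
  have step1 : ∀ t ∈ Ioi (0:ℝ),
      Real.exp (-(s * t)) * ((1 / Real.Gamma γ) * ∫ τ in (0:ℝ)..t, (t - τ) ^ (γ - 1) * g τ)
        = (1 / Real.Gamma γ) * ∫ τ in (0:ℝ)..t, F τ * G (t - τ) := by
    intro t _
    rw [mul_left_comm, ← intervalIntegral.integral_const_mul]
    congr 1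
    apply intervalIntegral.integral_congr
    intro τ _
    have e : Real.exp (-(s * τ)) * Real.exp (-(s * (t - τ))) = Real.exp (-(s * t)) := by
      rw [← Real.exp_add]; congr 1; ring
    simp only [hF_def, hG_def]
    rw [← e]; ring
  rw [setIntegral_congr_fun measurableSet_Ioi step1, integral_const_mul, conv, hGint]
  have hΓ : Real.Gamma γ ≠ 0 := (Real.Gamma_pos_of_pos hγ).ne'
  have hpow : (1 / s) ^ γ = s ^ (-γ) := by
    rw [one_div, Real.rpow_neg hs0.le, ← Real.inv_rpow hs0.le, inv_rpow hs0.le]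
  rw [hpow]
  field_simp

theorem triple_shehu_fracIntegral_t
    (γ : ℝ) (hγ : 0 < γ) (f : ℝ → ℝ → ℝ → ℝ) (M c₀ : ℝ)
    (hfc : Continuous fun p : ℝ × ℝ × ℝ => f p.1 p.2.1 p.2.2)
    (hfb : ∀ x ≥ (0:ℝ), ∀ y ≥ (0:ℝ), ∀ t ≥ (0:ℝ),
      |f x y t| ≤ M * Real.exp (c₀ * (x + y + t)))
    (a b c h k l : ℝ)
    (ha : 0 < a) (hb : 0 < b) (hc : 0 < c)
    (hh : 0 < h) (hk : 0 < k) (hl : 0 < l)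
    (h1 : c₀ < a / h) (h2 : c₀ < b / k) (h3 : c₀ < c / l) :
    (∫ x in Ioi (0:ℝ), ∫ y in Ioi (0:ℝ), ∫ t in Ioi (0:ℝ),
        Real.exp (-(a * x / h + b * y / k + c * t / l)) *
          ((1 / Real.Gamma γ) *
            ∫ τ in (0:ℝ)..t, (t - τ) ^ (γ - 1) * f x y τ)) =
      (c / l) ^ (-γ) *
        ∫ x in Ioi (0:ℝ), ∫ y in Ioi (0:ℝ), ∫ t in Ioi (0:ℝ),
          Real.exp (-(a * x / h + b * y / k + c * t / l)) * f x y t := by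
  rw [← integral_const_mul]
  apply setIntegral_congr_fun measurableSet_Ioi
  intro x hx
  beta_reduce
  rw [← integral_const_mul]
  apply setIntegral_congr_fun measurableSet_Ioi
  intro y hy
  beta_reduce
  set s : ℝ := c / l with hs_def
  set A : ℝ := a * x / h + b * y / k with hA_def
  have hs0 : 0 < s := div_pos hc hl
  have hgc : Continuous fun t => f x y t :=
    hfc.comp (continuous_const.prodMk (continuous_const.prodMk continuous_id))
  have hgb : ∀ t ≥ (0:ℝ), |f x y t| ≤ (M * Real.exp (c₀ * (x + y))) * Real.exp (c₀ * t) := by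
    intro t ht
    refine (hfb x (le_of_lt hx) y (le_of_lt hy) t ht).trans (le_of_eq ?_)
    rw [mul_assoc, ← Real.exp_add]
    congr 2
    ring
  have key := key_shehu hγ hs0 h3 hgc hgb
  have esplit : ∀ t : ℝ, Real.exp (-(a * x / h + b * y / k + c * t / l))
      = Real.exp (-A) * Real.exp (-(s * t)) := by
    intro t
    rw [← Real.exp_add]
    congr 1
    simp only [hA_def, hs_def]
    ring
  calc
    (∫ t in Ioi (0:ℝ), Real.exp (-(a * x / h + b * y / k + c * t / l)) *
        ((1 / Real.Gamma γ) * ∫ τ in (0:ℝ)..t, (t - τ) ^ (γ - 1) * f x y τ))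
        = ∫ t in Ioi (0:ℝ), Real.exp (-A) * (Real.exp (-(s * t)) *
            ((1 / Real.Gamma γ) * ∫ τ in (0:ℝ)..t, (t - τ) ^ (γ - 1) * f x y τ)) := by
          apply setIntegral_congr_fun measurableSet_Ioi
          intro t _
          beta_reduce
          rw [esplit t, mul_assoc]
    _ = Real.exp (-A) * ∫ t in Ioi (0:ℝ), Real.exp (-(s * t)) *
            ((1 / Real.Gamma γ) * ∫ τ in (0:ℝ)..t, (t - τ) ^ (γ - 1) * f x y τ) :=
          integral_const_mul _ _
    _ = Real.exp (-A) * (s ^ (-γ) * ∫ t in Ioi (0:ℝ), Real.exp (-(s * t)) * f x y t) := by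
          rw [key]
    _ = s ^ (-γ) * ∫ t in Ioi (0:ℝ), Real.exp (-A) * (Real.exp (-(s * t)) * f x y t) := by
          rw [integral_const_mul]; ring
    _ = s ^ (-γ) * ∫ t in Ioi (0:ℝ),
          Real.exp (-(a * x / h + b * y / k + c * t / l)) * f x y t := by
          congr 1
          apply setIntegral_congr_fun measurableSet_Ioi
          intro t _
          beta_reduce
          rw [esplit t, mul_assoc]
end
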